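/- There is an absolute constant C > 0 with the following properties. For all T > 0, t ∈ (0,T), x ≥ 0 and r > 0: (i) the heat-ball set e(t,x;r) = {(s,y) ∈ (0,T)×(0,∞) : s ≤ t and Ẽ(t−s,x,y) ≥ r} has two-dimensional Lebesgue measure at most C r^{−3}; (ii) the set e*(t;r) = {s ∈ (0,t) : E(t−s,0) ≥ r} is contained in the interval [t − 1/(4πr²), t], so its Lebesgue measure is at most 1/(4πr²). -/
import Mathlib


open MeasureTheory Real Set

/-- The one-dimensional Gaussian heat kernel `E(t,x) = (4πt)^{−1/2} e^{−x²/(4t)}`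
(extended by `0` for `t ≤ 0`). -/
noncomputable def heatE (t x : ℝ) : ℝ :=
  if 0 < t then (Real.sqrt (4 * π * t))⁻¹ * Real.exp (-(x ^ 2) / (4 * t)) else 0

/-- `Ẽ(t,x,y) = E(t,x−y) + E(t,x+y)`. -/
noncomputable def heatEtil (t x y : ℝ) : ℝ := heatE t (x - y) + heatE t (x + y)

lemma heatE_le_inv_sqrt {t : ℝ} (ht : 0 < t) (z : ℝ) :
    heatE t z ≤ (Real.sqrt (4 * π * t))⁻¹ := by
  rw [heatE, if_pos ht]
  have h1 : Real.exp (-(z ^ 2) / (4 * t)) ≤ 1 := by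
    rw [Real.exp_le_one_iff]
    have : 0 ≤ z ^ 2 / (4 * t) := by positivity
    linarith [this, (by ring : -(z ^ 2) / (4 * t) = -(z ^ 2 / (4 * t)))]
  calc (Real.sqrt (4 * π * t))⁻¹ * Real.exp (-(z ^ 2) / (4 * t))
      ≤ (Real.sqrt (4 * π * t))⁻¹ * 1 :=
        mul_le_mul_of_nonneg_left h1 (by positivity)
    _ = (Real.sqrt (4 * π * t))⁻¹ := mul_one _

lemma sqrt_le_exp {u : ℝ} (hu : 0 ≤ u) : Real.sqrt u ≤ Real.exp u := by
  nlinarith [Real.add_one_le_exp u, Real.sq_sqrt hu, Real.sqrt_nonneg u,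
    sq_nonneg (Real.sqrt u - 1), Real.exp_pos u]

lemma heatE_le_inv_abs (t : ℝ) {z : ℝ} (hz : z ≠ 0) :
    heatE t z ≤ 1 / (Real.sqrt π * |z|) := by
  have hπ := Real.pi_pos
  have hzabs : 0 < |z| := abs_pos.2 hz
  rw [heatE]
  split_ifs with ht
  · -- 0 < t
    have hA : 0 < Real.sqrt (4 * π * t) := Real.sqrt_pos.2 (by positivity)
    have hB : 0 < Real.sqrt π * |z| := by positivity
    rw [inv_mul_eq_div, div_le_div_iff₀ hA hB]
    -- goal: exp (-(z^2)/(4t)) * (√π |z|) ≤ √(4πt)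
    set u := z ^ 2 / (4 * t) with hu
    have hu0 : 0 ≤ u := by positivity
    have e1 : |z| = Real.sqrt (4 * t) * Real.sqrt u := by
      rw [← Real.sqrt_mul (by positivity : (0:ℝ) ≤ 4 * t),
        mul_div_cancel₀ _ (by positivity : (4:ℝ) * t ≠ 0)]
      exact (Real.sqrt_sq_eq_abs z).symm
    have e2 : Real.sqrt (4 * π * t) = Real.sqrt π * Real.sqrt (4 * t) := by
      rw [← Real.sqrt_mul Real.pi_pos.le]
      ring_nf
    have e3 : Real.exp (-(z ^ 2) / (4 * t)) = (Real.exp u)⁻¹ := by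
      rw [← Real.exp_neg]
      congr 1
      rw [hu]; ring
    rw [e1, e2, e3]
    have h4 : Real.sqrt u * (Real.exp u)⁻¹ ≤ 1 := by
      rw [mul_inv_le_iff₀ (Real.exp_pos u), one_mul]
      exact sqrt_le_exp hu0
    have h5 : 0 ≤ Real.sqrt π * Real.sqrt (4 * t) := by positivity
    calc (Real.exp u)⁻¹ * (Real.sqrt π * (Real.sqrt (4 * t) * Real.sqrt u))
        = (Real.sqrt π * Real.sqrt (4 * t)) * (Real.sqrt u * (Real.exp u)⁻¹) := by ring
      _ ≤ (Real.sqrt π * Real.sqrt (4 * t)) * 1 := mul_le_mul_of_nonneg_left h4 h5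
      _ = 1 * (Real.sqrt π * Real.sqrt (4 * t)) := by ring
  · positivity

lemma time_bound {τ r k : ℝ} (hτ : 0 < τ) (hr : 0 < r) (hk : 0 < k)
    (h : r ≤ k * (Real.sqrt (4 * π * τ))⁻¹) : τ ≤ k ^ 2 / (4 * π * r ^ 2) := by
  have hπ := Real.pi_pos
  have hA : 0 < Real.sqrt (4 * π * τ) := Real.sqrt_pos.2 (by positivity)
  have hsq : Real.sqrt (4 * π * τ) ^ 2 = 4 * π * τ := Real.sq_sqrt (by positivity)
  have h2 : r * Real.sqrt (4 * π * τ) ≤ k := by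
    calc r * Real.sqrt (4 * π * τ) ≤ (k * (Real.sqrt (4 * π * τ))⁻¹) * Real.sqrt (4 * π * τ) :=
          mul_le_mul_of_nonneg_right h hA.le
      _ = k := by field_simp
  rw [le_div_iff₀ (by positivity)]
  nlinarith [hA.le, mul_nonneg hr.le hA.le]

theorem heat_ball_estimates :
    ∃ C : ℝ, 0 < C ∧
      (∀ T t x r : ℝ, 0 < T → t ∈ Ioo 0 T → 0 ≤ x → 0 < r →
        volume {q : ℝ × ℝ | q ∈ Ioo 0 T ×ˢ Ioi 0 ∧ q.1 ≤ t ∧ r ≤ heatEtil (t - q.1) x q.2}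
          ≤ ENNReal.ofReal (C / r ^ 3)) ∧
      (∀ T t r : ℝ, 0 < T → t ∈ Ioo 0 T → 0 < r →
        {s : ℝ | s ∈ Ioo 0 t ∧ r ≤ heatE (t - s) 0} ⊆ Icc (t - 1 / (4 * π * r ^ 2)) t ∧
        volume {s : ℝ | s ∈ Ioo 0 t ∧ r ≤ heatE (t - s) 0}
          ≤ ENNReal.ofReal (1 / (4 * π * r ^ 2))) := by
  have hπ := Real.pi_pos
  have hπ3 := Real.pi_gt_three
  have hsπ : 1 ≤ Real.sqrt π := by
    rw [show (1:ℝ) = Real.sqrt 1 by simp]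
    exact Real.sqrt_le_sqrt (by linarith)
  refine ⟨6, by norm_num, ?_, ?_⟩
  · -- part (i)
    intro T t x r hT ht hx hr
    set a : ℝ := 1 / (π * r ^ 2) with ha
    set c : ℝ := 2 / (Real.sqrt π * r) with hc
    have ha0 : 0 < a := by positivity
    have hc0 : 0 < c := by positivity
    have hsub : {q : ℝ × ℝ | q ∈ Ioo 0 T ×ˢ Ioi 0 ∧ q.1 ≤ t ∧ r ≤ heatEtil (t - q.1) x q.2}
        ⊆ (Icc (t - a) t) ×ˢ (Icc (x - c) (x + c) ∪ Ioc 0 c) := by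
      rintro ⟨s, y⟩ ⟨⟨hs, hy⟩, hst, hr'⟩
      simp only [mem_Ioo, mem_Ioi] at hs hy
      have hτ : 0 < t - s := by
        rcases lt_or_eq_of_le hst with h | h
        · linarith
        · exfalso
          rw [h] at hr'
          simp only [heatEtil, heatE, sub_self, lt_self_iff_false, if_false, add_zero] at hr'
          linarith
      constructor
      · -- time component
        have hb1 := heatE_le_inv_sqrt hτ (x - y)
        have hb2 := heatE_le_inv_sqrt hτ (x + y)
        have h2 : r ≤ 2 * (Real.sqrt (4 * π * (t - s)))⁻¹ := by
          calc r ≤ heatEtil (t - s) x y := hr'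
            _ ≤ 2 * (Real.sqrt (4 * π * (t - s)))⁻¹ := by
                rw [heatEtil]; linarith
        have := time_bound hτ hr (by norm_num : (0:ℝ) < 2) h2
        have : t - s ≤ a := by
          rw [ha]
          calc t - s ≤ 2 ^ 2 / (4 * π * r ^ 2) := this
            _ = 1 / (π * r ^ 2) := by field_simp; ring
        exact ⟨by linarith, hst⟩
      · -- space component
        by_cases hyc : y ≤ c
        · exact Or.inr ⟨hy, hyc⟩
        · push_neg at hyc
          left
          by_contra hmem
          rw [mem_Icc] at hmem
          push_neg at hmem
          have habs : c < |x - y| := by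
            rcases lt_or_ge y (x - c) with h | h
            · rw [abs_sub_comm, abs_of_nonpos (by linarith)]; linarith
            · rw [abs_of_nonpos (by nlinarith [hmem h])]
              have := hmem h
              linarith
          have hsum : x + y ≠ 0 := by positivity
          have hdiff : x - y ≠ 0 := by
            intro h; rw [h] at habs; simp at habs; linarith
          have k1 : heatE (t - s) (x - y) ≤ 1 / (Real.sqrt π * |x - y|) :=
            heatE_le_inv_abs _ hdiff
          have k2 : heatE (t - s) (x + y) ≤ 1 / (Real.sqrt π * |x + y|) :=
            heatE_le_inv_abs _ hsum
          have hxy : |x + y| = x + y := abs_of_pos (by linarith)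
          have hrc : 1 / (Real.sqrt π * c) = r / 2 := by
            rw [hc]; field_simp
          have l1 : 1 / (Real.sqrt π * |x - y|) < r / 2 := by
            rw [← hrc]
            apply one_div_lt_one_div_of_lt (by positivity)
            have : 0 < Real.sqrt π := by positivity
            nlinarith
          have l2 : 1 / (Real.sqrt π * |x + y|) < r / 2 := by
            rw [← hrc, hxy]
            apply one_div_lt_one_div_of_lt (by positivity)
            have : 0 < Real.sqrt π := by positivity
            nlinarith
          have : heatEtil (t - s) x y < r := by
            rw [heatEtil]; linarith
          linarith
    calc volume {q : ℝ × ℝ | q ∈ Ioo 0 T ×ˢ Ioi 0 ∧ q.1 ≤ t ∧ r ≤ heatEtil (t - q.1) x q.2}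
        ≤ volume ((Icc (t - a) t) ×ˢ (Icc (x - c) (x + c) ∪ Ioc 0 c)) := measure_mono hsub
      _ = volume (Icc (t - a) t) * volume (Icc (x - c) (x + c) ∪ Ioc 0 c) := by
          rw [MeasureTheory.Measure.volume_eq_prod, Measure.prod_prod]
      _ ≤ ENNReal.ofReal a * ENNReal.ofReal (3 * c) := by
          apply mul_le_mul'
          · rw [Real.volume_Icc]
            apply ENNReal.ofReal_le_ofReal; linarith
          · calc volume (Icc (x - c) (x + c) ∪ Ioc 0 c)
                ≤ volume (Icc (x - c) (x + c)) + volume (Ioc 0 c) := measure_union_le _ _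
              _ = ENNReal.ofReal (2 * c) + ENNReal.ofReal c := by
                  rw [Real.volume_Icc, Real.volume_Ioc]
                  congr 1 <;> [skip; skip] <;> apply congrArg <;> ring
              _ ≤ ENNReal.ofReal (3 * c) := by
                  rw [← ENNReal.ofReal_add (by linarith) hc0.le]
                  apply ENNReal.ofReal_le_ofReal; linarith
      _ = ENNReal.ofReal (a * (3 * c)) := (ENNReal.ofReal_mul ha0.le).symm
      _ ≤ ENNReal.ofReal (6 / r ^ 3) := by
          apply ENNReal.ofReal_le_ofReal
          rw [ha, hc]
          have h1 : 1 / (π * r ^ 2) * (3 * (2 / (Real.sqrt π * r)))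
              = 6 / (π * Real.sqrt π * r ^ 3) := by
            field_simp; ring
          rw [h1]
          have h2 : r ^ 3 ≤ π * Real.sqrt π * r ^ 3 := by nlinarith [pow_pos hr 3, mul_le_mul_of_nonneg_left hsπ hπ.le]
          exact div_le_div_of_nonneg_left (by norm_num) (by positivity) h2
  · -- part (ii)
    intro T t r hT ht hr
    obtain ⟨ht0, htT⟩ := ht
    have hsub : {s : ℝ | s ∈ Ioo 0 t ∧ r ≤ heatE (t - s) 0} ⊆ Icc (t - 1 / (4 * π * r ^ 2)) t := by
      rintro s ⟨hs, hr'⟩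
      simp only [mem_Ioo] at hs
      have hτ : 0 < t - s := by linarith [hs.2]
      have heq : heatE (t - s) 0 = (Real.sqrt (4 * π * (t - s)))⁻¹ := by
        rw [heatE, if_pos hτ]
        norm_num
      rw [heq] at hr'
      have := time_bound hτ hr one_pos (by simpa using hr')
      have h2 : t - s ≤ 1 / (4 * π * r ^ 2) := by
        calc t - s ≤ 1 ^ 2 / (4 * π * r ^ 2) := this
          _ = 1 / (4 * π * r ^ 2) := by norm_num
      exact ⟨by linarith, by linarith [hs.2]⟩
    refine ⟨hsub, ?_⟩
    calc volume {s : ℝ | s ∈ Ioo 0 t ∧ r ≤ heatE (t - s) 0}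
        ≤ volume (Icc (t - 1 / (4 * π * r ^ 2)) t) := measure_mono hsub
      _ = ENNReal.ofReal (t - (t - 1 / (4 * π * r ^ 2))) := Real.volume_Icc
      _ ≤ ENNReal.ofReal (1 / (4 * π * r ^ 2)) := by
          apply ENNReal.ofReal_le_ofReal; linarith
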